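/- Let P be a commutative ring and a, b, x₁, x₂, x₃ ∈ P. Let R be the quotient of the ring of dual numbers P[ε] = P[ε]/(ε²) by the ideal generated by x₁ + ε·x₃·a and x₂ + ε·x₃·b. Then in R, the ideal generated by the images of x₁, x₂, x₃ is equal to the principal ideal generated by the image of x₃. -/
import Mathlib


set_option synthInstance.maxHeartbeats 400000
open TrivSqZeroExt

/-- The ideal of the dual numbers `P[ε]` generated by `x₁ + ε·x₃·a` and
`x₂ + ε·x₃·b`. -/
def defIdeal {P : Type*} [CommRing P] (a b x₁ x₂ x₃ : P) : Ideal (DualNumber P) :=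
  Ideal.span {inl x₁ + inr (x₃ * a), inl x₂ + inr (x₃ * b)}

/-- in the quotient `R = P[ε]/(x₁ + ε·x₃·a, x₂ + ε·x₃·b)` of the
dual numbers, the ideal generated by the images of `x₁`, `x₂`, `x₃` is the
principal ideal generated by the image of `x₃`. -/
theorem stmt9 {P : Type*} [CommRing P] (a b x₁ x₂ x₃ : P) :
    Ideal.span {Ideal.Quotient.mk (defIdeal a b x₁ x₂ x₃) (inl x₁),
        Ideal.Quotient.mk (defIdeal a b x₁ x₂ x₃) (inl x₂),
        Ideal.Quotient.mk (defIdeal a b x₁ x₂ x₃) (inl x₃)} =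
      Ideal.span {Ideal.Quotient.mk (defIdeal a b x₁ x₂ x₃) (inl x₃)} := by
  set q := Ideal.Quotient.mk (defIdeal a b x₁ x₂ x₃) with hq
  have h1 : q (inl x₁ + inr (x₃ * a)) = 0 :=
    Ideal.Quotient.eq_zero_iff_mem.mpr (Ideal.subset_span (by simp))
  have h2 : q (inl x₂ + inr (x₃ * b)) = 0 :=
    Ideal.Quotient.eq_zero_iff_mem.mpr (Ideal.subset_span (by simp))
  have e1 : q (inl x₁) = q (inl x₃) * q (-inr a) := by
    rw [map_add] at h1
    have : q (inl (x₁ : P)) = - q (inr (x₃ * a)) := by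
      rw [eq_neg_iff_add_eq_zero]; exact h1
    rw [this, ← map_mul]
    rw [mul_neg, inl_mul_inr]
    simp [smul_eq_mul]
  have e2 : q (inl x₂) = q (inl x₃) * q (-inr b) := by
    rw [map_add] at h2
    have : q (inl (x₂ : P)) = - q (inr (x₃ * b)) := by
      rw [eq_neg_iff_add_eq_zero]; exact h2
    rw [this, ← map_mul]
    rw [mul_neg, inl_mul_inr]
    simp [smul_eq_mul]
  apply le_antisymm
  · rw [Ideal.span_le]
    intro y hy
    simp only [Set.mem_insert_iff, Set.mem_singleton_iff] at hy
    rcases hy with rfl | rfl | rfl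
    · exact Ideal.mem_span_singleton.mpr ⟨q (-inr a), e1⟩
    · exact Ideal.mem_span_singleton.mpr ⟨q (-inr b), e2⟩
    · exact Ideal.subset_span rfl
  · exact Ideal.span_mono (by simp)
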